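/- Let A be of full row rank and let F be a nonempty face of Y⁰. Then the graph of the restriction of the solution multifunction S to D_F is convex: if (λ̂,b̂,x̂) and (λ̄,b̄,x̄) are in gph S with (λ̂,b̂), (λ̄,b̄) ∈ D_F, then every convex combination θ(λ̂,b̂,x̂) + (1−θ)(λ̄,b̄,x̄) with θ ∈ [0,1] also lies in gph S (and its (λ,b)-part lies in D_F). -/

import Mathlib

open Set

noncomputable section

variable {m n : ℕ}

/-- Euclidean distance between two vectors. -/
def en {k : ℕ} (x x' : Fin k → ℝ) : ℝ := Real.sqrt (∑ i, (x i - x' i) ^ 2)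

/-- The ℓ₁ norm. -/
def l1 {k : ℕ} (x : Fin k → ℝ) : ℝ := ∑ i, |x i|

/-- Squared Euclidean norm. -/
def sqnorm {k : ℕ} (y : Fin k → ℝ) : ℝ := ∑ i, (y i) ^ 2

/-- `A_iᵀ y`, the dot product of the `i`-th column of `A` with `y`. -/
def colDot (A : Matrix (Fin m) (Fin n) ℝ) (i : Fin n) (y : Fin m → ℝ) : ℝ := ∑ k, A k i * y k

/-- The dual feasible set `Y⁰ = {y : ‖Aᵀy‖_∞ ≤ 1}`. -/
def Ydual (A : Matrix (Fin m) (Fin n) ℝ) : Set (Fin m → ℝ) := {y | ∀ i, |colDot A i y| ≤ 1}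

/-- `F` is a face of `C`: the argmax set of a linear functional over `C`. -/
def IsFaceOf (C F : Set (Fin m → ℝ)) : Prop :=
  ∃ v : Fin m → ℝ, F = {y | y ∈ C ∧ ∀ z ∈ C, ∑ k, v k * z k ≤ ∑ k, v k * y k}

/-- `𝒜⁺(F)`. -/
def Aplus (A : Matrix (Fin m) (Fin n) ℝ) (F : Set (Fin m → ℝ)) : Set (Fin n) :=
  {i | ∀ y ∈ F, colDot A i y = 1}

/-- `𝒜⁻(F)`. -/
def Aminus (A : Matrix (Fin m) (Fin n) ℝ) (F : Set (Fin m → ℝ)) : Set (Fin n) :=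
  {i | ∀ y ∈ F, colDot A i y = -1}

/-- `𝒜⁰(F)`. -/
def Azero (A : Matrix (Fin m) (Fin n) ℝ) (F : Set (Fin m → ℝ)) : Set (Fin n) :=
  {i | ∃ y ∈ F, -1 < colDot A i y ∧ colDot A i y < 1}

/-- Solution set of the extended ℓ₁ regularization problem:
basis pursuit when `lam = 0`, Lasso-type problem when `lam > 0`. -/
def Sol (A : Matrix (Fin m) (Fin n) ℝ) (lam : ℝ) (b : Fin m → ℝ) : Set (Fin n → ℝ) :=
  if lam = 0 then
    {x | A.mulVec x = b ∧ ∀ z, A.mulVec z = b → l1 x ≤ l1 z}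
  else
    {x | ∀ z, l1 x + 1 / (2 * lam) * sqnorm (A.mulVec x - b) ≤
          l1 z + 1 / (2 * lam) * sqnorm (A.mulVec z - b)}

/-- Graph of the solution multifunction `S`. -/
def gphS (A : Matrix (Fin m) (Fin n) ℝ) : Set (ℝ × (Fin m → ℝ) × (Fin n → ℝ)) :=
  {p | 0 ≤ p.1 ∧ p.2.2 ∈ Sol A p.1 p.2.1}

/-- `A_iᵀ(b − Ax)`. -/
def resid (A : Matrix (Fin m) (Fin n) ℝ) (b : Fin m → ℝ) (x : Fin n → ℝ) (i : Fin n) : ℝ :=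
  colDot A i (b - A.mulVec x)

/-- The polyhedral cone `S_F` associated with a face `F` of `Y⁰`. -/
def SFace (A : Matrix (Fin m) (Fin n) ℝ) (F : Set (Fin m → ℝ)) :
    Set (ℝ × (Fin m → ℝ) × (Fin n → ℝ)) :=
  {p | 0 ≤ p.1 ∧
    (∀ i ∈ Aplus A F, 0 ≤ p.2.2 i ∧ resid A p.2.1 p.2.2 i = p.1) ∧
    (∀ i ∈ Azero A F, p.2.2 i = 0 ∧ |resid A p.2.1 p.2.2 i| ≤ p.1) ∧
    (∀ i ∈ Aminus A F, p.2.2 i ≤ 0 ∧ resid A p.2.1 p.2.2 i = -p.1)}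

/-- `cl W(I⁺, I⁰, I⁻)`. -/
def clW (Ip I0 Im : Set (Fin n)) : Set (Fin n → ℝ) :=
  {x | (∀ i ∈ Ip, 0 ≤ x i) ∧ (∀ i ∈ I0, x i = 0) ∧ (∀ i ∈ Im, x i ≤ 0)}

/-- `W(I⁺, I⁰, I⁻)`. -/
def Wset (Ip I0 Im : Set (Fin n)) : Set (Fin n → ℝ) :=
  {x | (∀ i ∈ Ip, 0 < x i) ∧ (∀ i ∈ I0, x i = 0) ∧ (∀ i ∈ Im, x i < 0)}

/-- The projection `D_F` of `S_F` onto the `(λ, b)` coordinates. -/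
def DFace (A : Matrix (Fin m) (Fin n) ℝ) (F : Set (Fin m → ℝ)) : Set (ℝ × (Fin m → ℝ)) :=
  (fun p => (p.1, p.2.1)) '' SFace A F

/-- The convex subdifferential of the ℓ₁ norm. -/
def l1subdiff {k : ℕ} (x : Fin k → ℝ) : Set (Fin k → ℝ) :=
  {v | ∀ z, l1 x + ∑ i, v i * (z i - x i) ≤ l1 z}

/-- Polyhedral subset of `ℝ × ℝ^m × ℝ^n`: a finite intersection of closed half-spaces. -/
def IsPolyhedral3 (s : Set (ℝ × (Fin m → ℝ) × (Fin n → ℝ))) : Prop :=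
  ∃ (k : ℕ) (a : Fin k → ℝ × (Fin m → ℝ) × (Fin n → ℝ)) (β : Fin k → ℝ),
    s = {p | ∀ j, (a j).1 * p.1 + (∑ t, (a j).2.1 t * p.2.1 t) +
          (∑ t, (a j).2.2 t * p.2.2 t) ≤ β j}

/-- Lipschitz continuity of a set-valued map on a set `X`, with constant `κ`. -/
def LipOn {a b : ℕ} (G : (Fin a → ℝ) → Set (Fin b → ℝ)) (X : Set (Fin a → ℝ)) (κ : ℝ) : Prop :=
  (∀ x ∈ X, (G x).Nonempty ∧ IsClosed (G x)) ∧
  ∀ x ∈ X, ∀ x' ∈ X, ∀ y' ∈ G x', ∃ y ∈ G x, en y' y ≤ κ * en x' x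

end

section AuxST

variable {m n : ℕ}

/-- Dot product helper. -/
def dotp {k : ℕ} (u w : Fin k → ℝ) : ℝ := ∑ j, u j * w j

lemma colDot_add (A : Matrix (Fin m) (Fin n) ℝ) (i : Fin n) (y z : Fin m → ℝ) :
    colDot A i (y + z) = colDot A i y + colDot A i z := by
  unfold colDot
  rw [← Finset.sum_add_distrib]
  exact Finset.sum_congr rfl fun k _ => by simp [mul_add]

lemma colDot_smul (A : Matrix (Fin m) (Fin n) ℝ) (i : Fin n) (c : ℝ) (y : Fin m → ℝ) :
    colDot A i (c • y) = c * colDot A i y := by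
  unfold colDot
  rw [Finset.mul_sum]
  exact Finset.sum_congr rfl fun k _ => by simp [Pi.smul_apply, smul_eq_mul]; ring

lemma colDot_finsum (A : Matrix (Fin m) (Fin n) ℝ) (i : Fin n) {ι : Type*} (s : Finset ι)
    (g : ι → (Fin m → ℝ)) : colDot A i (∑ j ∈ s, g j) = ∑ j ∈ s, colDot A i (g j) := by
  unfold colDot
  rw [Finset.sum_comm]
  exact Finset.sum_congr rfl fun k _ => by simp [Finset.mul_sum]

lemma sum_colDot_mul (A : Matrix (Fin m) (Fin n) ℝ) (y : Fin m → ℝ) (v : Fin n → ℝ) :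
    ∑ i, colDot A i y * v i = dotp y (A.mulVec v) := by
  have h1 : ∀ i, colDot A i y * v i = ∑ k, A k i * y k * v i := fun i => by
    rw [colDot, Finset.sum_mul]
  simp_rw [h1]
  rw [Finset.sum_comm]
  refine Finset.sum_congr rfl fun k _ => ?_
  simp only [dotp, Matrix.mulVec, dotProduct, Finset.mul_sum]
  exact Finset.sum_congr rfl fun i _ => by ring

lemma sqnorm_nonneg {k : ℕ} (u : Fin k → ℝ) : 0 ≤ sqnorm u :=
  Finset.sum_nonneg fun i _ => sq_nonneg _

lemma sqnorm_add_decomp {k : ℕ} (u w : Fin k → ℝ) :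
    sqnorm (u + w) = sqnorm u + 2 * dotp u w + sqnorm w := by
  unfold sqnorm dotp
  rw [Finset.mul_sum, ← Finset.sum_add_distrib, ← Finset.sum_add_distrib]
  exact Finset.sum_congr rfl fun i _ => by simp [Pi.add_apply]; ring

lemma face_subset {A : Matrix (Fin m) (Fin n) ℝ} {F : Set (Fin m → ℝ)}
    (hface : IsFaceOf (Ydual A) F) : F ⊆ Ydual A := by
  obtain ⟨v, rfl⟩ := hface; exact fun y hy => hy.1

lemma face_convex {A : Matrix (Fin m) (Fin n) ℝ} {F : Set (Fin m → ℝ)}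
    (hface : IsFaceOf (Ydual A) F) : Convex ℝ F := by
  obtain ⟨v, rfl⟩ := hface
  intro y hy z hz a b ha hb hab
  have hmem : a • y + b • z ∈ Ydual A := by
    intro i
    have h1 : colDot A i (a • y + b • z) = a * colDot A i y + b * colDot A i z := by
      rw [colDot_add, colDot_smul, colDot_smul]
    rw [h1]
    calc |a * colDot A i y + b * colDot A i z|
        ≤ |a * colDot A i y| + |b * colDot A i z| := abs_add_le _ _
      _ = a * |colDot A i y| + b * |colDot A i z| := by
          rw [abs_mul, abs_mul, abs_of_nonneg ha, abs_of_nonneg hb]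
      _ ≤ a * 1 + b * 1 :=
          add_le_add (mul_le_mul_of_nonneg_left (hy.1 i) ha)
            (mul_le_mul_of_nonneg_left (hz.1 i) hb)
      _ = 1 := by rw [mul_one, mul_one, hab]
  refine ⟨hmem, fun w hw => ?_⟩
  have h2 : ∑ k, v k * (a • y + b • z) k = a * (∑ k, v k * y k) + b * (∑ k, v k * z k) := by
    rw [Finset.mul_sum, Finset.mul_sum, ← Finset.sum_add_distrib]
    exact Finset.sum_congr rfl fun k _ => by simp [Pi.add_apply, Pi.smul_apply, smul_eq_mul]; ring
  rw [h2]
  calc ∑ k, v k * w k = a * (∑ k, v k * w k) + b * (∑ k, v k * w k) := by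
        rw [← add_mul, hab, one_mul]
    _ ≤ a * (∑ k, v k * y k) + b * (∑ k, v k * z k) :=
        add_le_add (mul_le_mul_of_nonneg_left (hy.2 w hw) ha)
          (mul_le_mul_of_nonneg_left (hz.2 w hw) hb)

lemma tri_mem {A : Matrix (Fin m) (Fin n) ℝ} {F : Set (Fin m → ℝ)}
    (hface : IsFaceOf (Ydual A) F) (i : Fin n) :
    i ∈ Aplus A F ∨ i ∈ Azero A F ∨ i ∈ Aminus A F := by
  by_cases h1 : ∀ y ∈ F, colDot A i y = 1
  · exact Or.inl h1
  by_cases h2 : ∀ y ∈ F, colDot A i y = -1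
  · exact Or.inr (Or.inr h2)
  push_neg at h1 h2
  obtain ⟨y1, hy1, hne1⟩ := h1
  obtain ⟨y2, hy2, hne2⟩ := h2
  have hc := face_convex hface
  have hy3 : (1/2 : ℝ) • y1 + (1/2 : ℝ) • y2 ∈ F :=
    hc hy1 hy2 (by norm_num) (by norm_num) (by norm_num)
  have hb1 := face_subset hface hy1 i
  have hb2 := face_subset hface hy2 i
  rw [abs_le] at hb1 hb2
  have hlt1 : colDot A i y1 < 1 := lt_of_le_of_ne hb1.2 hne1
  have hlt2 : -1 < colDot A i y2 := lt_of_le_of_ne hb2.1 (Ne.symm hne2)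
  have hval : colDot A i ((1/2 : ℝ) • y1 + (1/2 : ℝ) • y2)
      = (1/2) * colDot A i y1 + (1/2) * colDot A i y2 := by
    rw [colDot_add, colDot_smul, colDot_smul]
  refine Or.inr (Or.inl ⟨(1/2 : ℝ) • y1 + (1/2 : ℝ) • y2, hy3, ?_, ?_⟩) <;> rw [hval]
  · nlinarith [hb1.1, hb2.1]
  · nlinarith [hb1.2, hb2.2]

lemma exists_ri {A : Matrix (Fin m) (Fin n) ℝ} {F : Set (Fin m → ℝ)}
    (hface : IsFaceOf (Ydual A) F) (hne : F.Nonempty) :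
    ∃ y₀ ∈ F, ∀ i ∈ Azero A F, |colDot A i y₀| < 1 := by
  classical
  obtain ⟨yh, hyh⟩ := hne
  rcases Nat.eq_zero_or_pos n with hn | hn
  · exact ⟨yh, hyh, fun i _ => absurd i.isLt (by omega)⟩
  set g : Fin n → (Fin m → ℝ) := fun i => if h : i ∈ Azero A F then h.choose else yh with hg
  have hgF : ∀ i, g i ∈ F := by
    intro i; rw [hg]; dsimp only
    split_ifs with h
    · exact h.choose_spec.1
    · exact hyh
  have hgself : ∀ i, i ∈ Azero A F → -1 < colDot A i (g i) ∧ colDot A i (g i) < 1 := by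
    intro i h; rw [hg]; dsimp only; rw [dif_pos h]; exact h.choose_spec.2
  have hnR : (0:ℝ) < (n:ℝ) := by exact_mod_cast hn
  refine ⟨∑ i : Fin n, ((n:ℝ)⁻¹) • g i, ?_, ?_⟩
  · refine (face_convex hface).sum_mem (fun i _ => by positivity) ?_ (fun i _ => hgF i)
    rw [Finset.sum_const, Finset.card_univ, Fintype.card_fin, nsmul_eq_mul]
    field_simp
  · intro j hj
    have hval : colDot A j (∑ i : Fin n, ((n:ℝ)⁻¹) • g i)
        = ∑ i : Fin n, (n:ℝ)⁻¹ * colDot A j (g i) := by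
      rw [colDot_finsum]
      exact Finset.sum_congr rfl fun i _ => colDot_smul _ _ _ _
    rw [hval, abs_lt]
    have hbd : ∀ i, |colDot A j (g i)| ≤ 1 := fun i => face_subset hface (hgF i) j
    constructor
    · have hlt : ∑ i : Fin n, ((n:ℝ)⁻¹ * (-1)) < ∑ i : Fin n, (n:ℝ)⁻¹ * colDot A j (g i) := by
        refine Finset.sum_lt_sum (fun i _ => ?_) ⟨j, Finset.mem_univ j, ?_⟩
        · have := (abs_le.mp (hbd i)).1
          have hpos : (0:ℝ) < (n:ℝ)⁻¹ := by positivity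
          nlinarith
        · have := (hgself j hj).1
          have hpos : (0:ℝ) < (n:ℝ)⁻¹ := by positivity
          nlinarith
      have : ∑ _i : Fin n, ((n:ℝ)⁻¹ * (-1)) = -1 := by
        rw [Finset.sum_const, Finset.card_univ, Fintype.card_fin, nsmul_eq_mul]
        field_simp
      linarith [this ▸ hlt]
    · have hlt : ∑ i : Fin n, (n:ℝ)⁻¹ * colDot A j (g i) < ∑ _i : Fin n, ((n:ℝ)⁻¹ * 1) := by
        refine Finset.sum_lt_sum (fun i _ => ?_) ⟨j, Finset.mem_univ j, ?_⟩
        · have := (abs_le.mp (hbd i)).2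
          have hpos : (0:ℝ) < (n:ℝ)⁻¹ := by positivity
          nlinarith
        · have := (hgself j hj).2
          have hpos : (0:ℝ) < (n:ℝ)⁻¹ := by positivity
          nlinarith
      have : ∑ _i : Fin n, ((n:ℝ)⁻¹ * 1) = 1 := by
        rw [Finset.sum_const, Finset.card_univ, Fintype.card_fin, nsmul_eq_mul]
        field_simp
      linarith [this ▸ hlt]

lemma eq_zero_of_colDot {A : Matrix (Fin m) (Fin n) ℝ} (hrank : A.rank = m)
    {w : Fin m → ℝ} (h : ∀ i, colDot A i w = 0) : w = 0 := by
  have hsurj : Function.Surjective A.mulVec := by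
    have htop : LinearMap.range A.mulVecLin = ⊤ := by
      apply Submodule.eq_top_of_finrank_eq
      rw [show Module.finrank ℝ (LinearMap.range A.mulVecLin) = A.rank from rfl, hrank]
      simp [Module.finrank_fin_fun]
    intro b
    obtain ⟨v, hv⟩ := LinearMap.range_eq_top.mp htop b
    exact ⟨v, hv⟩
  obtain ⟨v, hv⟩ := hsurj w
  have hdot : dotp w w = 0 := by
    have hs := sum_colDot_mul A w v
    rw [hv] at hs
    rw [← hs]
    exact Finset.sum_eq_zero fun i _ => by rw [h i, zero_mul]
  have hz : ∀ j ∈ Finset.univ, w j * w j = 0 :=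
    (Finset.sum_eq_zero_iff_of_nonneg (fun j _ => mul_self_nonneg (w j))).mp hdot
  funext j
  have := hz j (Finset.mem_univ j)
  simpa [mul_self_eq_zero] using this


lemma opt_of_cert {A : Matrix (Fin m) (Fin n) ℝ} {lam : ℝ} (hlam : 0 < lam)
    (b : Fin m → ℝ) (x v : Fin n → ℝ)
    (hv1 : ∀ i, |v i| ≤ 1) (hvx : ∀ i, v i * x i = |x i|)
    (hres : ∀ i, resid A b x i = lam * v i) :
    x ∈ Sol A lam b := by
  rw [Sol, if_neg hlam.ne']
  intro z
  set u := A.mulVec x - b with hu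
  set d : Fin n → ℝ := fun i => z i - x i with hd
  have hAz : A.mulVec z - b = u + A.mulVec d := by
    have hz : z = x + d := by funext i; simp [hd]
    rw [hz, Matrix.mulVec_add, hu]; abel
  have hbAx : b - A.mulVec x = -u := by rw [hu]; abel
  have key : ∑ i, v i * d i = -(1/lam * dotp u (A.mulVec d)) := by
    have h1 : ∀ i, v i * d i = 1/lam * (resid A b x i * d i) := fun i => by
      rw [hres i]; field_simp
    simp_rw [h1]
    rw [← Finset.mul_sum]
    have h2 : ∑ i, resid A b x i * d i = dotp (b - A.mulVec x) (A.mulVec d) :=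
      sum_colDot_mul A (b - A.mulVec x) d
    rw [h2, hbAx]
    have h3 : dotp (-u) (A.mulVec d) = -dotp u (A.mulVec d) := by
      simp [dotp, neg_mul, Finset.sum_neg_distrib]
    rw [h3]; ring
  have hsq : sqnorm (A.mulVec z - b) = sqnorm u + 2 * dotp u (A.mulVec d) + sqnorm (A.mulVec d) := by
    rw [hAz, sqnorm_add_decomp]
  have hl1z : ∑ i, v i * z i ≤ l1 z := by
    refine Finset.sum_le_sum fun i _ => ?_
    calc v i * z i ≤ |v i * z i| := le_abs_self _
      _ = |v i| * |z i| := abs_mul _ _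
      _ ≤ 1 * |z i| := mul_le_mul_of_nonneg_right (hv1 i) (abs_nonneg _)
      _ = |z i| := one_mul _
  have hsplit : ∑ i, v i * z i = l1 x + ∑ i, v i * d i := by
    rw [l1]
    have h4 : ∑ i, |x i| = ∑ i, v i * x i := Finset.sum_congr rfl fun i _ => (hvx i).symm
    rw [h4, ← Finset.sum_add_distrib]
    refine Finset.sum_congr rfl fun i _ => ?_
    simp [hd]; ring
  have hAd : 0 ≤ sqnorm (A.mulVec d) := sqnorm_nonneg _
  have hc : (0:ℝ) ≤ 1/(2*lam) := by positivity
  have hc2 : 1/(2*lam) * 2 = 1/lam := by field_simp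
  have hexp : 1/(2*lam) * (sqnorm u + 2 * dotp u (A.mulVec d) + sqnorm (A.mulVec d))
      = 1/(2*lam) * sqnorm u + (1/(2*lam) * 2) * dotp u (A.mulVec d)
        + 1/(2*lam) * sqnorm (A.mulVec d) := by ring
  rw [hc2] at hexp
  rw [hsq, hexp]
  have hAd' : 0 ≤ 1/(2*lam) * sqnorm (A.mulVec d) := mul_nonneg hc hAd
  linarith [hl1z, hsplit, key]

lemma SFace_mem_Sol {A : Matrix (Fin m) (Fin n) ℝ} {F : Set (Fin m → ℝ)}
    (hrank : A.rank = m) (hface : IsFaceOf (Ydual A) F) (hne : F.Nonempty)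
    {lam : ℝ} {b : Fin m → ℝ} {x : Fin n → ℝ}
    (hp : (lam, b, x) ∈ SFace A F) : x ∈ Sol A lam b := by
  obtain ⟨hlam', hP', hZ', hM'⟩ := hp
  have hlam : 0 ≤ lam := hlam'
  have hP : ∀ i ∈ Aplus A F, 0 ≤ x i ∧ resid A b x i = lam := hP'
  have hZ : ∀ i ∈ Azero A F, x i = 0 ∧ |resid A b x i| ≤ lam := hZ'
  have hM : ∀ i ∈ Aminus A F, x i ≤ 0 ∧ resid A b x i = -lam := hM'
  rcases eq_or_lt_of_le hlam with heq | hpos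
  · -- lam = 0
    have hres0 : ∀ i, resid A b x i = 0 := by
      intro i
      rcases tri_mem hface i with h | h | h
      · rw [(hP i h).2, ← heq]
      · have := (hZ i h).2; rw [← heq] at this; exact abs_nonpos_iff.mp this
      · rw [(hM i h).2, ← heq, neg_zero]
    have hbx : A.mulVec x = b := by
      have h0 : b - A.mulVec x = 0 := eq_zero_of_colDot hrank (fun i => hres0 i)
      exact (sub_eq_zero.mp h0).symm
    rw [Sol, if_pos heq.symm]
    refine ⟨hbx, fun z hz => ?_⟩
    obtain ⟨y₀, hy₀⟩ := hne
    have hw1 : ∀ i, |colDot A i y₀| ≤ 1 := face_subset hface hy₀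
    have hwx : ∀ i, colDot A i y₀ * x i = |x i| := by
      intro i
      rcases tri_mem hface i with h | h | h
      · rw [h y₀ hy₀, one_mul, abs_of_nonneg (hP i h).1]
      · rw [(hZ i h).1, mul_zero, abs_zero]
      · rw [h y₀ hy₀, abs_of_nonpos (hM i h).1]; ring
    calc l1 x = ∑ i, colDot A i y₀ * x i :=
          Finset.sum_congr rfl fun i _ => (hwx i).symm
      _ = dotp y₀ (A.mulVec x) := sum_colDot_mul A y₀ x
      _ = dotp y₀ (A.mulVec z) := by rw [hbx, hz]
      _ = ∑ i, colDot A i y₀ * z i := (sum_colDot_mul A y₀ z).symm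
      _ ≤ l1 z := by
          refine Finset.sum_le_sum fun i _ => ?_
          calc colDot A i y₀ * z i ≤ |colDot A i y₀ * z i| := le_abs_self _
            _ = |colDot A i y₀| * |z i| := abs_mul _ _
            _ ≤ 1 * |z i| := mul_le_mul_of_nonneg_right (hw1 i) (abs_nonneg _)
            _ = |z i| := one_mul _
  · -- lam > 0
    set v : Fin n → ℝ := fun i => resid A b x i / lam with hv
    have hres : ∀ i, resid A b x i = lam * v i := by
      intro i; rw [hv]; field_simp
    have hv1 : ∀ i, |v i| ≤ 1 := by
      intro i
      rcases tri_mem hface i with h | h | h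
      · rw [hv]; dsimp only; rw [(hP i h).2, div_self hpos.ne']; norm_num
      · rw [hv]; dsimp only; rw [abs_div, abs_of_pos hpos, div_le_one hpos]
        exact (hZ i h).2
      · rw [hv]; dsimp only; rw [(hM i h).2, neg_div, div_self hpos.ne']; norm_num
    have hvx : ∀ i, v i * x i = |x i| := by
      intro i
      rcases tri_mem hface i with h | h | h
      · rw [hv]; dsimp only; rw [(hP i h).2, div_self hpos.ne', one_mul,
          abs_of_nonneg (hP i h).1]
      · rw [(hZ i h).1, mul_zero, abs_zero]
      · rw [hv]; dsimp only; rw [(hM i h).2, neg_div, div_self hpos.ne',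
          abs_of_nonpos (hM i h).1]; ring
    exact opt_of_cert hpos b x v hv1 hvx hres

lemma sqnorm_avg {k : ℕ} (w w' : Fin k → ℝ) :
    sqnorm (fun j => (w j + w' j)/2)
      = (sqnorm w + sqnorm w')/2 - sqnorm (fun j => (w j - w' j)/2) := by
  unfold sqnorm
  rw [eq_sub_iff_add_eq, ← Finset.sum_add_distrib, ← Finset.sum_add_distrib, Finset.sum_div]
  exact Finset.sum_congr rfl fun j _ => by ring

lemma l1_avg_le {k : ℕ} (x x' : Fin k → ℝ) :
    l1 (fun i => (x i + x' i)/2) ≤ (l1 x + l1 x')/2 := by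
  unfold l1
  rw [← Finset.sum_add_distrib, Finset.sum_div]
  refine Finset.sum_le_sum fun i _ => ?_
  rw [abs_div, abs_of_pos (by norm_num : (0:ℝ) < 2)]
  have := abs_add_le (x i) (x' i)
  linarith

lemma sqnorm_eq_zero_iff {k : ℕ} {u : Fin k → ℝ} (h : sqnorm u = 0) : ∀ j, u j = 0 := by
  intro j
  have := (Finset.sum_eq_zero_iff_of_nonneg (fun j (_ : j ∈ Finset.univ) => sq_nonneg (u j))).mp h
  exact pow_eq_zero_iff (by norm_num) |>.mp (this j (Finset.mem_univ j))

lemma sol_common {A : Matrix (Fin m) (Fin n) ℝ} {lam : ℝ} (hlam : 0 < lam)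
    {b : Fin m → ℝ} {x x' : Fin n → ℝ}
    (hx : x ∈ Sol A lam b) (hx' : x' ∈ Sol A lam b) :
    A.mulVec x = A.mulVec x' ∧ l1 x = l1 x' := by
  rw [Sol, if_neg hlam.ne'] at hx hx'
  set c := 1/(2*lam) with hc
  have hcpos : 0 < c := by rw [hc]; positivity
  set u := A.mulVec x - b with hu
  set u' := A.mulVec x' - b with hu'
  have hFeq : l1 x + c * sqnorm u = l1 x' + c * sqnorm u' :=
    le_antisymm (hx x') (hx' x)
  set xm : Fin n → ℝ := fun i => (x i + x' i)/2 with hxm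
  have hAxm : A.mulVec xm - b = fun j => (u j + u' j)/2 := by
    funext j
    have hxmv : xm = (1/2 : ℝ) • x + (1/2 : ℝ) • x' := by
      funext i; simp [hxm]; ring
    rw [hxmv, Matrix.mulVec_add, Matrix.mulVec_smul, Matrix.mulVec_smul]
    simp [hu, hu']
    ring
  have hmain := hx xm
  rw [hAxm, sqnorm_avg] at hmain
  have hl1m := l1_avg_le x x'
  have hd0 : sqnorm (fun j => (u j - u' j)/2) = 0 := by
    have hnn := sqnorm_nonneg (fun j => (u j - u' j)/2)
    nlinarith [hmain, hl1m, hFeq]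
  have huu' : ∀ j, u j = u' j := by
    intro j
    have h5 : (u j - u' j)/2 = 0 := sqnorm_eq_zero_iff hd0 j
    linarith
  have hA : A.mulVec x = A.mulVec x' := by
    funext j
    have := huu' j
    simp only [hu, hu', Pi.sub_apply] at this
    linarith
  have hsq : sqnorm u = sqnorm u' := by
    unfold sqnorm
    exact Finset.sum_congr rfl fun j _ => by rw [huu' j]
  refine ⟨hA, ?_⟩
  have := hFeq
  rw [hsq] at this
  linarith

lemma sol_signs {A : Matrix (Fin m) (Fin n) ℝ} {F : Set (Fin m → ℝ)}
    (hface : IsFaceOf (Ydual A) F) (hne : F.Nonempty)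
    {lam : ℝ} {b : Fin m → ℝ} {x x' : Fin n → ℝ}
    (hx' : (lam, b, x') ∈ SFace A F)
    (hAx : A.mulVec x = A.mulVec x') (hl1 : l1 x = l1 x') :
    (lam, b, x) ∈ SFace A F := by
  obtain ⟨hlam', hP', hZ', hM'⟩ := hx'
  have hlam : 0 ≤ lam := hlam'
  have hP : ∀ i ∈ Aplus A F, 0 ≤ x' i ∧ resid A b x' i = lam := hP'
  have hZ : ∀ i ∈ Azero A F, x' i = 0 ∧ |resid A b x' i| ≤ lam := hZ'
  have hM : ∀ i ∈ Aminus A F, x' i ≤ 0 ∧ resid A b x' i = -lam := hM'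
  obtain ⟨y₀, hy₀F, hy₀⟩ := exists_ri hface hne
  have hw1 : ∀ i, |colDot A i y₀| ≤ 1 := face_subset hface hy₀F
  have hwx' : ∀ i, colDot A i y₀ * x' i = |x' i| := by
    intro i
    rcases tri_mem hface i with h | h | h
    · rw [h y₀ hy₀F, one_mul, abs_of_nonneg (hP i h).1]
    · rw [(hZ i h).1, mul_zero, abs_zero]
    · rw [h y₀ hy₀F, abs_of_nonpos (hM i h).1]; ring
  have hsum : ∑ i, colDot A i y₀ * x i = ∑ i, |x i| := by
    calc ∑ i, colDot A i y₀ * x i = dotp y₀ (A.mulVec x) := sum_colDot_mul A y₀ x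
      _ = dotp y₀ (A.mulVec x') := by rw [hAx]
      _ = ∑ i, colDot A i y₀ * x' i := (sum_colDot_mul A y₀ x').symm
      _ = ∑ i, |x' i| := Finset.sum_congr rfl fun i _ => hwx' i
      _ = l1 x' := rfl
      _ = l1 x := hl1.symm
      _ = ∑ i, |x i| := rfl
  have hle : ∀ i ∈ Finset.univ, colDot A i y₀ * x i ≤ |x i| := by
    intro i _
    calc colDot A i y₀ * x i ≤ |colDot A i y₀ * x i| := le_abs_self _
      _ = |colDot A i y₀| * |x i| := abs_mul _ _
      _ ≤ 1 * |x i| := mul_le_mul_of_nonneg_right (hw1 i) (abs_nonneg _)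
      _ = |x i| := one_mul _
  have heach : ∀ i, colDot A i y₀ * x i = |x i| := by
    intro i
    exact (Finset.sum_eq_sum_iff_of_le hle).mp hsum i (Finset.mem_univ i)
  have hresid : ∀ i, resid A b x i = resid A b x' i := by
    intro i; unfold resid; rw [hAx]
  refine ⟨hlam, ?_, ?_, ?_⟩
  · intro i h
    show 0 ≤ x i ∧ resid A b x i = lam
    constructor
    · have := heach i
      rw [h y₀ hy₀F, one_mul] at this
      rw [this]; exact abs_nonneg _
    · rw [hresid i]; exact (hP i h).2
  · intro i h
    show x i = 0 ∧ |resid A b x i| ≤ lam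
    have hwi : |colDot A i y₀| < 1 := hy₀ i h
    have hx0 : x i = 0 := by
      by_contra hne0
      have habs : 0 < |x i| := abs_pos.mpr hne0
      have h1 : |x i| = colDot A i y₀ * x i := (heach i).symm
      have h2 : colDot A i y₀ * x i ≤ |colDot A i y₀| * |x i| := by
        calc colDot A i y₀ * x i ≤ |colDot A i y₀ * x i| := le_abs_self _
          _ = |colDot A i y₀| * |x i| := abs_mul _ _
      nlinarith
    exact ⟨hx0, by rw [hresid i]; exact (hZ i h).2⟩
  · intro i h
    show x i ≤ 0 ∧ resid A b x i = -lam
    constructor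
    · have := heach i
      rw [h y₀ hy₀F] at this
      nlinarith [abs_nonneg (x i), this]
    · rw [hresid i]; exact (hM i h).2

lemma gph_mem_SFace {A : Matrix (Fin m) (Fin n) ℝ} {F : Set (Fin m → ℝ)}
    (hrank : A.rank = m) (hface : IsFaceOf (Ydual A) F) (hne : F.Nonempty)
    {lam : ℝ} {b : Fin m → ℝ} {x : Fin n → ℝ}
    (hlam : 0 ≤ lam) (hx : x ∈ Sol A lam b) (hD : (lam, b) ∈ DFace A F) :
    (lam, b, x) ∈ SFace A F := by
  obtain ⟨p', hp'SF, hproj⟩ := hD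
  have hl' : p'.1 = lam := congrArg Prod.fst hproj
  have hb' : p'.2.1 = b := congrArg Prod.snd hproj
  have hx'SF : (lam, b, p'.2.2) ∈ SFace A F := by
    rw [← hl', ← hb']
    exact hp'SF
  have hx' : p'.2.2 ∈ Sol A lam b := SFace_mem_Sol hrank hface hne hx'SF
  rcases eq_or_lt_of_le hlam with heq | hpos
  · rw [Sol, if_pos heq.symm] at hx hx'
    have hA : A.mulVec x = A.mulVec p'.2.2 := by rw [hx.1, hx'.1]
    have hl1 : l1 x = l1 p'.2.2 :=
      le_antisymm (hx.2 _ hx'.1) (hx'.2 _ hx.1)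
    exact sol_signs hface hne hx'SF hA hl1
  · obtain ⟨hA, hl1⟩ := sol_common hpos hx hx'
    exact sol_signs hface hne hx'SF hA hl1

lemma resid_combo {A : Matrix (Fin m) (Fin n) ℝ} (θ : ℝ)
    (b b' : Fin m → ℝ) (x x' : Fin n → ℝ) (i : Fin n) :
    resid A (θ • b + (1-θ) • b') (θ • x + (1-θ) • x') i
      = θ * resid A b x i + (1-θ) * resid A b' x' i := by
  unfold resid
  rw [Matrix.mulVec_add, Matrix.mulVec_smul, Matrix.mulVec_smul]
  have h : (θ • b + (1-θ) • b') - (θ • A.mulVec x + (1-θ) • A.mulVec x')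
      = θ • (b - A.mulVec x) + (1-θ) • (b' - A.mulVec x') := by
    funext k
    simp [Pi.smul_apply, smul_eq_mul]
    ring
  rw [h, colDot_add, colDot_smul, colDot_smul]

lemma SFace_convex {A : Matrix (Fin m) (Fin n) ℝ} {F : Set (Fin m → ℝ)}
    {la lb : ℝ} {b1 b2 : Fin m → ℝ} {x1 x2 : Fin n → ℝ}
    (h1 : (la, b1, x1) ∈ SFace A F) (h2 : (lb, b2, x2) ∈ SFace A F)
    {θ : ℝ} (h0 : 0 ≤ θ) (h1θ : 0 ≤ 1-θ) :
    (θ*la + (1-θ)*lb, θ•b1 + (1-θ)•b2, θ•x1 + (1-θ)•x2) ∈ SFace A F := by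
  obtain ⟨hl1', hP1', hZ1', hM1'⟩ := h1
  obtain ⟨hl2', hP2', hZ2', hM2'⟩ := h2
  have hl1 : 0 ≤ la := hl1'
  have hP1 : ∀ i ∈ Aplus A F, 0 ≤ x1 i ∧ resid A b1 x1 i = la := hP1'
  have hZ1 : ∀ i ∈ Azero A F, x1 i = 0 ∧ |resid A b1 x1 i| ≤ la := hZ1'
  have hM1 : ∀ i ∈ Aminus A F, x1 i ≤ 0 ∧ resid A b1 x1 i = -la := hM1'
  have hl2 : 0 ≤ lb := hl2'
  have hP2 : ∀ i ∈ Aplus A F, 0 ≤ x2 i ∧ resid A b2 x2 i = lb := hP2'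
  have hZ2 : ∀ i ∈ Azero A F, x2 i = 0 ∧ |resid A b2 x2 i| ≤ lb := hZ2'
  have hM2 : ∀ i ∈ Aminus A F, x2 i ≤ 0 ∧ resid A b2 x2 i = -lb := hM2'
  have hxi : ∀ i, (θ•x1 + (1-θ)•x2) i = θ * x1 i + (1-θ) * x2 i := by
    intro i; simp [Pi.smul_apply, smul_eq_mul]
  refine ⟨?_, ?_, ?_, ?_⟩
  · show 0 ≤ θ*la + (1-θ)*lb
    have := mul_nonneg h0 hl1
    have := mul_nonneg h1θ hl2
    linarith
  · intro i h
    show 0 ≤ (θ•x1 + (1-θ)•x2) i ∧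
      resid A (θ•b1 + (1-θ)•b2) (θ•x1 + (1-θ)•x2) i = θ*la + (1-θ)*lb
    rw [hxi i, resid_combo]
    exact ⟨add_nonneg (mul_nonneg h0 (hP1 i h).1) (mul_nonneg h1θ (hP2 i h).1),
      by rw [(hP1 i h).2, (hP2 i h).2]⟩
  · intro i h
    show (θ•x1 + (1-θ)•x2) i = 0 ∧
      |resid A (θ•b1 + (1-θ)•b2) (θ•x1 + (1-θ)•x2) i| ≤ θ*la + (1-θ)*lb
    rw [hxi i, resid_combo]
    refine ⟨by rw [(hZ1 i h).1, (hZ2 i h).1]; ring, ?_⟩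
    calc |θ * resid A b1 x1 i + (1-θ) * resid A b2 x2 i|
        ≤ |θ * resid A b1 x1 i| + |(1-θ) * resid A b2 x2 i| := abs_add_le _ _
      _ = θ * |resid A b1 x1 i| + (1-θ) * |resid A b2 x2 i| := by
          rw [abs_mul, abs_mul, abs_of_nonneg h0, abs_of_nonneg h1θ]
      _ ≤ θ * la + (1-θ) * lb :=
          add_le_add (mul_le_mul_of_nonneg_left (hZ1 i h).2 h0)
            (mul_le_mul_of_nonneg_left (hZ2 i h).2 h1θ)
  · intro i h
    show (θ•x1 + (1-θ)•x2) i ≤ 0 ∧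
      resid A (θ•b1 + (1-θ)•b2) (θ•x1 + (1-θ)•x2) i = -(θ*la + (1-θ)*lb)
    rw [hxi i, resid_combo]
    refine ⟨?_, by rw [(hM1 i h).2, (hM2 i h).2]; ring⟩
    have := mul_nonpos_of_nonneg_of_nonpos h0 (hM1 i h).1
    have := mul_nonpos_of_nonneg_of_nonpos h1θ (hM2 i h).1
    linarith

lemma aux_stmt15 {A : Matrix (Fin m) (Fin n) ℝ} (hrank : A.rank = m)
    {F : Set (Fin m → ℝ)} (hface : IsFaceOf (Ydual A) F) (hne : F.Nonempty) :
    ∀ p ∈ gphS A, ∀ q ∈ gphS A,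
      (p.1, p.2.1) ∈ DFace A F → (q.1, q.2.1) ∈ DFace A F →
      ∀ θ : ℝ, θ ∈ Icc (0 : ℝ) 1 →
        θ • p + (1 - θ) • q ∈ gphS A ∧
        ((θ • p + (1 - θ) • q).1, (θ • p + (1 - θ) • q).2.1) ∈ DFace A F := by
  intro p hp q hq hpD hqD θ hθ
  obtain ⟨hθ0, hθ1⟩ := hθ
  have h1θ : 0 ≤ 1 - θ := by linarith
  have hpS : (p.1, p.2.1, p.2.2) ∈ SFace A F :=
    gph_mem_SFace hrank hface hne hp.1 hp.2 hpD
  have hqS : (q.1, q.2.1, q.2.2) ∈ SFace A F :=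
    gph_mem_SFace hrank hface hne hq.1 hq.2 hqD
  have hcombo : (θ*p.1 + (1-θ)*q.1, θ•p.2.1 + (1-θ)•q.2.1, θ•p.2.2 + (1-θ)•q.2.2)
      ∈ SFace A F := SFace_convex hpS hqS hθ0 h1θ
  have heq : θ • p + (1 - θ) • q
      = (θ*p.1 + (1-θ)*q.1, θ•p.2.1 + (1-θ)•q.2.1, θ•p.2.2 + (1-θ)•q.2.2) := rfl
  rw [heq]
  refine ⟨⟨hcombo.1, SFace_mem_Sol hrank hface hne hcombo⟩, ?_⟩
  exact ⟨_, hcombo, rfl⟩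

end AuxST

theorem stmt15 {m n : ℕ} (A : Matrix (Fin m) (Fin n) ℝ) (hrank : A.rank = m)
    (F : Set (Fin m → ℝ)) (hface : IsFaceOf (Ydual A) F) (hne : F.Nonempty) :
    ∀ p ∈ gphS A, ∀ q ∈ gphS A,
      (p.1, p.2.1) ∈ DFace A F → (q.1, q.2.1) ∈ DFace A F →
      ∀ θ : ℝ, θ ∈ Icc (0 : ℝ) 1 →
        θ • p + (1 - θ) • q ∈ gphS A ∧
        ((θ • p + (1 - θ) • q).1, (θ • p + (1 - θ) • q).2.1) ∈ DFace A F :=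
  aux_stmt15 hrank hface hne
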